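/- arXiv:math/0602240 — 3 statements merged into one kernel-verified Lean document; each statement's English description precedes it below -/
import Mathlib

section
/- Let μ₁, μ₂ be finite nonnegative measures on [0,τ] with continuous, strictly positive densities λ₁, λ₂ with respect to Lebesgue measure. If for a random vector a ~ N(m, V) (V positive definite) and measurable bounded functions u₁(t), u₂(t), one has exp(u₁(t)ᵀa)λ₁(t) = exp(u₂(t)ᵀa)λ₂(t) for almost every t and almost every a, then u₁(t) = u₂(t) and λ₁(t) = λ₂(t) for almost every t. -/
/-!
The Gaussian law has an everywhere positive density, so Lebesgue-null sets are null for it and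
the identity holds Lebesgue-a.e. in `a`; both sides are continuous in `a`, hence it holds for
every `a`. Taking `a = 0` gives `l₁ t = l₂ t`, and then the basis vectors give `u₁ t = u₂ t`.
-/

open MeasureTheory Real Matrix

lemma eq_and_eq_of_exp_dotProduct_mul_eq {ι : Type*} [Fintype ι] {u₁ u₂ : ι → ℝ}
    {c₁ c₂ : ℝ} (hc₂ : c₂ ≠ 0) (h : ∀ a, exp (u₁ ⬝ᵥ a) * c₁ = exp (u₂ ⬝ᵥ a) * c₂) :
    u₁ = u₂ ∧ c₁ = c₂ := by
  classical
  have hc : c₁ = c₂ := by simpa using h 0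
  refine ⟨funext fun i => ?_, hc⟩
  have hi := h (Pi.single i 1)
  rw [hc, mul_left_inj' hc₂, exp_eq_exp] at hi
  simpa using hi

lemma eq_and_eq_of_ae_exp_dotProduct_mul_eq {ι : Type*} [Fintype ι] {μ : Measure (ι → ℝ)}
    [μ.IsOpenPosMeasure] {u₁ u₂ : ι → ℝ} {c₁ c₂ : ℝ} (hc₂ : c₂ ≠ 0)
    (h : ∀ᵐ a ∂μ, exp (u₁ ⬝ᵥ a) * c₁ = exp (u₂ ⬝ᵥ a) * c₂) :
    u₁ = u₂ ∧ c₁ = c₂ := by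
  have hall := (Continuous.ae_eq_iff_eq μ (by fun_prop) (by fun_prop)).1 h
  exact eq_and_eq_of_exp_dotProduct_mul_eq hc₂ (congrFun hall)

theorem identifiability_of_hazard_general (d : ℕ) (τ : ℝ)
    (m : Fin d → ℝ) (V : Matrix (Fin d) (Fin d) ℝ) (hV : V.PosDef)
    (μ : Measure (Fin d → ℝ))
    (hμ : μ = volume.withDensity (fun a =>
      ENNReal.ofReal ((2 * π) ^ (-(d : ℝ) / 2) * V.det ^ (-(1 : ℝ) / 2) *
        Real.exp (-(dotProduct (a - m) (V⁻¹.mulVec (a - m))) / 2))))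
    (l₁ l₂ : ℝ → ℝ)
    (hl₂pos : ∀ t ∈ Set.Icc 0 τ, 0 < l₂ t)
    (u₁ u₂ : ℝ → (Fin d → ℝ))
    (heq : ∀ᵐ t ∂(volume.restrict (Set.Icc 0 τ)), ∀ᵐ a ∂μ,
      Real.exp (dotProduct (u₁ t) a) * l₁ t = Real.exp (dotProduct (u₂ t) a) * l₂ t) :
    ∀ᵐ t ∂(volume.restrict (Set.Icc 0 τ)), u₁ t = u₂ t ∧ l₁ t = l₂ t := by
  have hconst : 0 < (2 * π) ^ (-(d : ℝ) / 2) * V.det ^ (-(1 : ℝ) / 2) :=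
    mul_pos (rpow_pos_of_pos (by positivity) _) (rpow_pos_of_pos hV.det_pos _)
  have hac : volume ≪ μ := hμ ▸ withDensity_absolutelyContinuous' (by fun_prop)
    (ae_of_all _ fun a => (ENNReal.ofReal_pos.2 (mul_pos hconst (exp_pos _))).ne')
  filter_upwards [heq, ae_restrict_mem measurableSet_Icc] with t ht htmem
  exact eq_and_eq_of_ae_exp_dotProduct_mul_eq (hl₂pos t htmem).ne' (hac.ae_le ht)

/-- Identifiability step: if `a ~ N(m, V)` with `V` positive definite and, for a.e. `t`
in `[0,τ]` and a.e. `a`, `exp(u₁(t)ᵀa) l₁(t) = exp(u₂(t)ᵀa) l₂(t)` with `λᵢ` continuous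
and strictly positive densities and `uᵢ` bounded measurable, then `u₁(t) = u₂(t)` and
`l₁(t) = l₂(t)` for almost every `t ∈ [0,τ]`. -/
theorem identifiability_of_hazard (d : ℕ) (τ : ℝ) (hτ : 0 < τ)
    (m : Fin d → ℝ) (V : Matrix (Fin d) (Fin d) ℝ) (hV : V.PosDef)
    (μ : Measure (Fin d → ℝ))
    (hμ : μ = volume.withDensity (fun a =>
      ENNReal.ofReal ((2 * π) ^ (-(d : ℝ) / 2) * V.det ^ (-(1 : ℝ) / 2) *
        Real.exp (-(dotProduct (a - m) (V⁻¹.mulVec (a - m))) / 2))))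
    (l₁ l₂ : ℝ → ℝ)
    (hl₁cont : ContinuousOn l₁ (Set.Icc 0 τ)) (hl₂cont : ContinuousOn l₂ (Set.Icc 0 τ))
    (hl₁pos : ∀ t ∈ Set.Icc 0 τ, 0 < l₁ t) (hl₂pos : ∀ t ∈ Set.Icc 0 τ, 0 < l₂ t)
    (u₁ u₂ : ℝ → (Fin d → ℝ))
    (hu₁ : Measurable u₁) (hu₂ : Measurable u₂)
    (hu₁bd : ∃ M, ∀ t, ‖u₁ t‖ ≤ M) (hu₂bd : ∃ M, ∀ t, ‖u₂ t‖ ≤ M)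
    (heq : ∀ᵐ t ∂(volume.restrict (Set.Icc 0 τ)), ∀ᵐ a ∂μ,
      Real.exp (dotProduct (u₁ t) a) * l₁ t = Real.exp (dotProduct (u₂ t) a) * l₂ t) :
    ∀ᵐ t ∂(volume.restrict (Set.Icc 0 τ)), u₁ t = u₂ t ∧ l₁ t = l₂ t :=
  identifiability_of_hazard_general d τ m V hV μ hμ l₁ l₂ hl₂pos u₁ u₂ heq
end

section
/- Let σ₁, σ₂ > 0 and let Σ₁, Σ₂ be positive definite d×d matrices. Suppose X̃ is an n×d matrix with n > d and X̃ᵀX̃ of full rank, and that σ₁² I_n + X̃ Σ₁ X̃ᵀ = σ₂² I_n + X̃ Σ₂ X̃ᵀ. Then σ₁ = σ₂ and Σ₁ = Σ₂. -/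
/-! Since `n > d`, some nonzero `v` satisfies `X̃ᵀ v = 0`; applying both covariance matrices to `v`
gives `σ₁² v = σ₂² v`. The remaining equality `X̃ Σ₁ X̃ᵀ = X̃ Σ₂ X̃ᵀ` is cancelled on both sides
using the left inverse `(X̃ᵀX̃)⁻¹X̃ᵀ` of `X̃`. -/

open Matrix

namespace Matrix

variable {m n l K : Type*} [Fintype m] [Fintype n]

theorem exists_ne_zero_mulVec_eq_zero_of_card_lt [Field K] (A : Matrix m n K)
    (h : Fintype.card m < Fintype.card n) : ∃ v : n → K, v ≠ 0 ∧ A *ᵥ v = 0 := by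
  obtain ⟨v, hv, hv0⟩ := Submodule.exists_mem_ne_zero_of_ne_bot <|
    LinearMap.ker_ne_bot_of_finrank_lt (f := A.mulVecLin) (by simpa using h)
  exact ⟨v, hv0, hv⟩

theorem mul_mul_mulVec_eq_zero [CommRing K] {X : Matrix m n K} {v : m → K}
    (hv : Xᵀ *ᵥ v = 0) (A : Matrix n n K) : (X * A * Xᵀ) *ᵥ v = 0 := by
  rw [← mulVec_mulVec, hv, mulVec_zero]

theorem eq_of_smul_one_add_eq_smul_one_add [DecidableEq n] [Field K] {c₁ c₂ : K}
    {A₁ A₂ : Matrix n n K} {v : n → K} (hv : v ≠ 0) (h₁ : A₁ *ᵥ v = 0) (h₂ : A₂ *ᵥ v = 0)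
    (h : c₁ • (1 : Matrix n n K) + A₁ = c₂ • 1 + A₂) : c₁ = c₂ := by
  have hv' : c₁ • v = c₂ • v := by
    simpa only [add_mulVec, smul_mulVec, one_mulVec, h₁, h₂, add_zero] using
      congrArg (· *ᵥ v) h
  exact smul_left_injective K hv hv'

variable [DecidableEq n] [CommRing K] {X : Matrix m n K}

theorem eq_of_mul_eq_mul_of_isUnit_transpose_mul (hX : IsUnit (Xᵀ * X))
    {A B : Matrix n l K} (h : X * A = X * B) : A = B := by
  have := hX.invertible
  have h' : Xᵀ * X * A = Xᵀ * X * B := by rw [Matrix.mul_assoc, h, Matrix.mul_assoc]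
  simpa only [inv_mul_cancel_left_of_invertible] using congrArg ((Xᵀ * X)⁻¹ * ·) h'

theorem eq_of_mul_transpose_eq_mul_transpose_of_isUnit_transpose_mul [Fintype l]
    (hX : IsUnit (Xᵀ * X)) {A B : Matrix l n K} (h : A * Xᵀ = B * Xᵀ) : A = B := by
  rw [← transpose_inj]
  apply eq_of_mul_eq_mul_of_isUnit_transpose_mul hX
  simpa only [transpose_mul, transpose_transpose] using congrArg transpose h

theorem eq_of_mul_mul_transpose_eq_of_isUnit_transpose_mul (hX : IsUnit (Xᵀ * X))
    {A B : Matrix n n K} (h : X * A * Xᵀ = X * B * Xᵀ) : A = B :=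
  eq_of_mul_eq_mul_of_isUnit_transpose_mul hX
    (eq_of_mul_transpose_eq_mul_transpose_of_isUnit_transpose_mul hX h)

end Matrix

theorem variance_components_identifiable_general (n d : ℕ) (hnd : d < n)
    (σ₁ σ₂ : ℝ) (hσ₁ : 0 < σ₁) (hσ₂ : 0 < σ₂)
    (S₁ S₂ : Matrix (Fin d) (Fin d) ℝ)
    (X : Matrix (Fin n) (Fin d) ℝ) (hX : IsUnit (Xᵀ * X))
    (heq : σ₁ ^ 2 • (1 : Matrix (Fin n) (Fin n) ℝ) + X * S₁ * Xᵀ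
         = σ₂ ^ 2 • (1 : Matrix (Fin n) (Fin n) ℝ) + X * S₂ * Xᵀ) :
    σ₁ = σ₂ ∧ S₁ = S₂ := by
  obtain ⟨v, hv, hXv⟩ := Xᵀ.exists_ne_zero_mulVec_eq_zero_of_card_lt (by simpa using hnd)
  have hsq : σ₁ ^ 2 = σ₂ ^ 2 := eq_of_smul_one_add_eq_smul_one_add hv
    (mul_mul_mulVec_eq_zero hXv S₁) (mul_mul_mulVec_eq_zero hXv S₂) heq
  have hσ : σ₁ = σ₂ := (pow_left_inj₀ hσ₁.le hσ₂.le two_ne_zero).mp hsq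
  refine ⟨hσ, eq_of_mul_mul_transpose_eq_of_isUnit_transpose_mul hX ?_⟩
  rwa [hσ, add_right_inj] at heq

/-- Identifiability of variance components in a linear mixed model: if `n > d`,
`X̃ᵀX̃` has full rank, and `σ₁² Iₙ + X̃ S₁ X̃ᵀ = σ₂² Iₙ + X̃ S₂ X̃ᵀ`, then
`σ₁ = σ₂` and `S₁ = S₂`. -/
theorem variance_components_identifiable (n d : ℕ) (hnd : d < n)
    (σ₁ σ₂ : ℝ) (hσ₁ : 0 < σ₁) (hσ₂ : 0 < σ₂)
    (S₁ S₂ : Matrix (Fin d) (Fin d) ℝ) (hS₁ : S₁.PosDef) (hS₂ : S₂.PosDef)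
    (X : Matrix (Fin n) (Fin d) ℝ) (hX : IsUnit (Xᵀ * X))
    (heq : σ₁ ^ 2 • (1 : Matrix (Fin n) (Fin n) ℝ) + X * S₁ * Xᵀ
         = σ₂ ^ 2 • (1 : Matrix (Fin n) (Fin n) ℝ) + X * S₂ * Xᵀ) :
    σ₁ = σ₂ ∧ S₁ = S₂ :=
  variance_components_identifiable_general n d hnd σ₁ σ₂ hσ₁ hσ₂ S₁ S₂ X hX heq
end

section
/- Let V_a = (Σ^{-1} + X̃ᵀX̃/σ²)^{-1}. Suppose h ∈ R and a symmetric matrix D satisfy: (i) -(1/(2σ²))Tr(X̃ᵀX̃ V_a Σ^{-1} D) - Nh/σ + (h/σ³)Tr(X̃ᵀX̃ V_a) = 0, and (ii) (1/(2σ⁴)) X̃ V_a Σ^{-1} D Σ^{-1} V_a X̃ᵀ + (h/σ³)[I - (2/σ²) X̃ V_a X̃ᵀ + (1/σ⁴) X̃ V_a X̃ᵀ X̃ V_a X̃ᵀ] = 0, where X̃ is an N×d matrix with N > d and X̃ᵀX̃ invertible, Σ positive definite, σ > 0. Then h = 0 and D = 0. -/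
open Matrix

/-- Linear-algebraic core of the injectivity of the information operator: if `h` and a
symmetric matrix `D` satisfy the two stated equations, with `N > d`, `X̃ᵀX̃` invertible,
`Σ` positive definite and `σ > 0`, then `h = 0` and `D = 0`. -/
theorem information_operator_injective_core (N d : ℕ) (hNd : d < N)
    (σ : ℝ) (hσ : 0 < σ)
    (S : Matrix (Fin d) (Fin d) ℝ) (hS : S.PosDef)
    (X : Matrix (Fin N) (Fin d) ℝ) (hX : IsUnit (Xᵀ * X))
    (Va : Matrix (Fin d) (Fin d) ℝ)
    (hVa : Va = (S⁻¹ + (σ ^ 2)⁻¹ • (Xᵀ * X))⁻¹)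
    (h : ℝ) (D : Matrix (Fin d) (Fin d) ℝ) (hD : D.IsSymm)
    (h1 : -(1 / (2 * σ ^ 2)) * ((Xᵀ * X) * Va * S⁻¹ * D).trace
        - (N : ℝ) * h / σ + (h / σ ^ 3) * ((Xᵀ * X) * Va).trace = 0)
    (h2 : (1 / (2 * σ ^ 4)) • (X * Va * S⁻¹ * D * S⁻¹ * Va * Xᵀ)
        + (h / σ ^ 3) • ((1 : Matrix (Fin N) (Fin N) ℝ)
            - (2 / σ ^ 2) • (X * Va * Xᵀ)
            + (1 / σ ^ 4) • (X * Va * Xᵀ * X * Va * Xᵀ)) = 0) :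
    h = 0 ∧ D = 0 := by
  -- Step 1: find a nonzero vector in the kernel of Xᵀ (exists since d < N)
  obtain ⟨v, hv0, hvker⟩ : ∃ v : Fin N → ℝ, v ≠ 0 ∧ Xᵀ *ᵥ v = 0 := by
    by_contra hcon
    push_neg at hcon
    have hinj : Function.Injective (Xᵀ).mulVecLin := by
      rw [← LinearMap.ker_eq_bot, LinearMap.ker_eq_bot']
      intro m hm
      by_contra hm0
      exact (hcon m hm0) hm
    have := LinearMap.finrank_le_finrank_of_injective hinj
    simp [Module.finrank_pi] at this
    omega
  -- Step 2: apply h2 to v; every X ⋯ Xᵀ term kills v, leaving (h/σ³) • v = 0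
  have hmv := congrArg (fun M => M *ᵥ v) h2
  have hkill : ∀ A : Matrix (Fin d) (Fin d) ℝ, (X * A * Xᵀ) *ᵥ v = 0 := by
    intro A
    simp [Matrix.mul_assoc, ← Matrix.mulVec_mulVec, hvker]
  simp only [Matrix.add_mulVec, Matrix.sub_mulVec, Matrix.smul_mulVec,
    Matrix.one_mulVec, Matrix.zero_mulVec] at hmv
  have hk1 : (X * Va * S⁻¹ * D * S⁻¹ * Va * Xᵀ) *ᵥ v = 0 := by
    have := hkill (Va * S⁻¹ * D * S⁻¹ * Va)
    simpa [Matrix.mul_assoc] using this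
  have hk2 : (X * Va * Xᵀ) *ᵥ v = 0 := hkill Va
  have hk3 : (X * Va * Xᵀ * X * Va * Xᵀ) *ᵥ v = 0 := by
    have := hkill (Va * Xᵀ * X * Va)
    simpa [Matrix.mul_assoc] using this
  rw [hk1, hk2, hk3] at hmv
  simp only [smul_zero, zero_add, add_zero, sub_zero] at hmv
  have hh : h = 0 := by
    have hv' : (h / σ ^ 3) • v = 0 := hmv
    rcases smul_eq_zero.mp hv' with hc | hc
    · field_simp at hc
      simpa using hc
    · exact absurd hc hv0
  refine ⟨hh, ?_⟩
  -- Step 3: with h = 0, h2 gives X * Va * S⁻¹ * D * S⁻¹ * Va * Xᵀ = 0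
  rw [hh] at h2
  simp only [zero_div, zero_smul, add_zero] at h2
  have hM0 : X * Va * S⁻¹ * D * S⁻¹ * Va * Xᵀ = 0 := by
    have h24 : (1 / (2 * σ ^ 4) : ℝ) ≠ 0 := by positivity
    have := smul_eq_zero.mp h2
    tauto
  -- Sandwich with Xᵀ and X
  have hsand : (Xᵀ * X) * (Va * S⁻¹ * D * S⁻¹ * Va) * (Xᵀ * X) = 0 := by
    have := congrArg (fun M => Xᵀ * M * X) hM0
    simpa [Matrix.mul_assoc] using this
  -- cancel XᵀX on both sides
  have hXdet : IsUnit (Xᵀ * X).det := (Matrix.isUnit_iff_isUnit_det _).mp hX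
  have hsand' : (Xᵀ * X) * (Va * S⁻¹ * D * S⁻¹ * Va * (Xᵀ * X)) = 0 := by
    rw [← Matrix.mul_assoc]; exact hsand
  have hL : Va * S⁻¹ * D * S⁻¹ * Va * (Xᵀ * X) = 0 := by
    have := congrArg (fun M => (Xᵀ * X)⁻¹ * M) hsand'
    rwa [Matrix.nonsing_inv_mul_cancel_left _ _ hXdet, Matrix.mul_zero] at this
  have hVSDSV : Va * S⁻¹ * D * S⁻¹ * Va = 0 := by
    have := congrArg (fun M => M * (Xᵀ * X)⁻¹) hL
    rwa [Matrix.mul_nonsing_inv_cancel_right _ _ hXdet, Matrix.zero_mul] at this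
  -- Va and S⁻¹ are invertible; conclude D = 0
  have hSinv : S⁻¹.PosDef := hS.inv
  have hXtX : (Xᵀ * X).PosSemidef := by
    have := Matrix.posSemidef_conjTranspose_mul_self X
    simpa using this
  have hB : (S⁻¹ + (σ ^ 2)⁻¹ • (Xᵀ * X)).PosDef := by
    refine hSinv.add_posSemidef ?_
    constructor
    · show ((σ ^ 2)⁻¹ • (Xᵀ * X))ᴴ = _
      rw [Matrix.conjTranspose_smul, hXtX.isHermitian.eq]
      simp
    · intro x
      exact (hXtX.smul (a := (σ ^ 2)⁻¹) (by positivity)).2 x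
  have hVaPD : Va.PosDef := hVa ▸ hB.inv
  have hVadet : IsUnit Va.det := (Matrix.isUnit_iff_isUnit_det _).mp hVaPD.isUnit
  have hSdet : IsUnit S⁻¹.det := (Matrix.isUnit_iff_isUnit_det _).mp hSinv.isUnit
  have step1 : S⁻¹ * D * S⁻¹ * Va = 0 := by
    have := congrArg (fun M => Va⁻¹ * M) hVSDSV
    simpa [Matrix.mul_assoc, Matrix.nonsing_inv_mul_cancel_left _ _ hVadet] using this
  have step2 : S⁻¹ * D * S⁻¹ = 0 := by
    have := congrArg (fun M => M * Va⁻¹) step1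
    simpa [Matrix.mul_assoc, Matrix.mul_nonsing_inv_cancel_right _ _ hVadet] using this
  have step3 : D * S⁻¹ = 0 := by
    have := congrArg (fun M => S⁻¹⁻¹ * M) step2
    simpa [Matrix.mul_assoc, Matrix.nonsing_inv_mul_cancel_left _ _ hSdet] using this
  have := congrArg (fun M => M * S⁻¹⁻¹) step3
  simpa [Matrix.mul_nonsing_inv_cancel_right _ _ hSdet] using this
end
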